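/- arXiv:2601.05420 — 2 statements merged into one kernel-verified Lean document; each statement's English description precedes it below -/
import Mathlib

section
/- Let θ ∈ (0,1), q₀,q₁ ∈ (0,1) with q₀+q₁ > 1, γ₁ > 0, p = (1-θ)(1-q₀)+θq₁, κ = q₀+q₁-1. Define V_PPI = p(1-p) + γ₁[(1-θ)(1-q₀)+θ(1-q₁)-(θ-p)²] and V_RG = (1/κ²)[p(1-p) + γ₁((1-θ)q₀(1-q₀)+θq₁(1-q₁))]. Then V_PPI ≤ V_RG, with equality if and only if q₀ = q₁ = 1. -/
theorem stmt_10 (θ q₀ q₁ γ₁ p κ V_PPI V_RG : ℝ)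
    (hθ : θ ∈ Set.Ioo (0:ℝ) 1) (hq₀ : q₀ ∈ Set.Ioo (0:ℝ) 1) (hq₁ : q₁ ∈ Set.Ioo (0:ℝ) 1)
    (hsum : 1 < q₀ + q₁) (hγ : 0 < γ₁)
    (hp : p = (1 - θ) * (1 - q₀) + θ * q₁) (hκ : κ = q₀ + q₁ - 1)
    (hPPI : V_PPI = p * (1 - p) + γ₁ * ((1 - θ) * (1 - q₀) + θ * (1 - q₁) - (θ - p) ^ 2))
    (hRG : V_RG = (1 / κ ^ 2) * (p * (1 - p) + γ₁ * ((1 - θ) * q₀ * (1 - q₀) + θ * q₁ * (1 - q₁)))) :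
    V_PPI ≤ V_RG ∧ (V_PPI = V_RG ↔ q₀ = 1 ∧ q₁ = 1) := by
  obtain ⟨hθ0, hθ1⟩ := hθ
  obtain ⟨hq00, hq01⟩ := hq₀
  obtain ⟨hq10, hq11⟩ := hq₁
  have hκ0 : 0 < κ := by rw [hκ]; linarith
  have hκ1 : κ < 1 := by rw [hκ]; linarith
  have hκ2 : 0 < κ ^ 2 := by positivity
  have hp0 : 0 < p := by
    rw [hp]
    have := mul_pos (by linarith : (0:ℝ) < 1 - θ) (by linarith : (0:ℝ) < 1 - q₀)
    nlinarith [mul_pos hθ0 hq10]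
  have hp1 : p < 1 := by
    rw [hp]; nlinarith [mul_pos (by linarith : (0:ℝ) < 1 - θ) hq00,
      mul_pos hθ0 (by linarith : (0:ℝ) < 1 - q₁)]
  -- D0 > 0
  have hD0 : 0 < p * (1 - p) * (1 - κ ^ 2) :=
    mul_pos (mul_pos hp0 (by linarith)) (by nlinarith)
  -- D1 ≥ 0 via exact decomposition
  have t1 : 0 ≤ κ * ((1 - θ) * (1 - q₀) ^ 2 + θ * (1 - q₁) ^ 2) := by
    apply mul_nonneg hκ0.le
    have := mul_nonneg (by linarith : (0:ℝ) ≤ 1 - θ) (sq_nonneg (1 - q₀))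
    have := mul_nonneg hθ0.le (sq_nonneg (1 - q₁))
    linarith
  have t2 : 0 ≤ (1 + κ) * ((1 - q₀) * (1 - q₁)) := by
    apply mul_nonneg (by linarith)
    exact mul_nonneg (by linarith) (by linarith)
  have t3 : 0 ≤ κ ^ 2 * (θ * (1 - q₁) - (1 - θ) * (1 - q₀)) ^ 2 :=
    mul_nonneg hκ2.le (sq_nonneg _)
  have hD1 : 0 ≤ ((1 - θ) * q₀ * (1 - q₀) + θ * q₁ * (1 - q₁)) -
      κ ^ 2 * ((1 - θ) * (1 - q₀) + θ * (1 - q₁) - (θ - p) ^ 2) := by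
    have hid : ((1 - θ) * q₀ * (1 - q₀) + θ * q₁ * (1 - q₁)) -
        κ ^ 2 * ((1 - θ) * (1 - q₀) + θ * (1 - q₁) - (θ - p) ^ 2)
        = κ * ((1 - θ) * (1 - q₀) ^ 2 + θ * (1 - q₁) ^ 2)
          + (1 + κ) * ((1 - q₀) * (1 - q₁))
          + κ ^ 2 * (θ * (1 - q₁) - (1 - θ) * (1 - q₀)) ^ 2 := by
      rw [hp, hκ]; ring
    linarith [hid]
  have key : V_PPI * κ ^ 2 < p * (1 - p) + γ₁ * ((1 - θ) * q₀ * (1 - q₀) + θ * q₁ * (1 - q₁)) := by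
    have := mul_nonneg hγ.le hD1
    rw [hPPI]; nlinarith
  have hlt : V_PPI < V_RG := by
    rw [hRG, one_div, inv_mul_eq_div, lt_div_iff₀ hκ2]
    exact key
  refine ⟨hlt.le, ?_, ?_⟩
  · intro h; exact absurd h hlt.ne
  · rintro ⟨h0, h1⟩; exact absurd h1 hq11.ne
end

section
/- Let θ ∈ (0,1), q₀,q₁ ∈ (0,1) with q₀+q₁ > 1, κ = q₀+q₁-1, V₁ = p(1-p) where p = (1-θ)(1-q₀)+θq₁, V₂ = (1-θ)(1-q₀)+θ(1-q₁)-(θ-p)², and V₃ = (1-θ)q₀(1-q₀)+θq₁(1-q₁). Then V₃ = V₁ - θ(1-θ)κ², and moreover V₃ - κ²V₂ ≥ 0. -/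
theorem stmt_11 (θ q₀ q₁ κ p V₁ V₂ V₃ : ℝ)
    (hθ : θ ∈ Set.Ioo (0:ℝ) 1) (hq₀ : q₀ ∈ Set.Ioo (0:ℝ) 1) (hq₁ : q₁ ∈ Set.Ioo (0:ℝ) 1)
    (hsum : 1 < q₀ + q₁) (hκ : κ = q₀ + q₁ - 1)
    (hp : p = (1 - θ) * (1 - q₀) + θ * q₁)
    (hV₁ : V₁ = p * (1 - p))
    (hV₂ : V₂ = (1 - θ) * (1 - q₀) + θ * (1 - q₁) - (θ - p) ^ 2)
    (hV₃ : V₃ = (1 - θ) * q₀ * (1 - q₀) + θ * q₁ * (1 - q₁)) :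
    V₃ = V₁ - θ * (1 - θ) * κ ^ 2 ∧ 0 ≤ V₃ - κ ^ 2 * V₂ := by
  obtain ⟨h1,h2⟩ := hθ; obtain ⟨h3,h4⟩ := hq₀; obtain ⟨h5,h6⟩ := hq₁
  have hu : 0 ≤ (1-θ)*(1-q₀) := mul_nonneg (by linarith) (by linarith)
  have hv : 0 ≤ θ*(1-q₁) := mul_nonneg (by linarith) (by linarith)
  have hκ0 : 0 ≤ κ := by rw [hκ]; linarith
  have hκ1 : κ ≤ 1 := by rw [hκ]; linarith
  have hV2 : 0 ≤ V₂ := by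
    rw [hV₂, hp]
    have hs : (1-θ)*(1-q₀)+θ*(1-q₁) ≤ 1 := by nlinarith
    nlinarith [mul_nonneg hu hv, mul_nonneg (add_nonneg hu hv) (by linarith : (0:ℝ) ≤ 1 - ((1-θ)*(1-q₀)+θ*(1-q₁)))]
  refine ⟨by rw [hV₃, hV₁, hp, hκ]; ring, ?_⟩
  nlinarith [mul_nonneg (mul_nonneg hκ0 (by linarith : (0:ℝ) ≤ 1-κ)) hV2,
    mul_nonneg hκ0 (sq_nonneg ((1-θ)*(1-q₀)-θ*(1-q₁))),
    mul_nonneg (by linarith : (0:ℝ) ≤ 1-q₀) hv,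
    mul_nonneg (by linarith : (0:ℝ) ≤ 1-q₁) hu,
    hV₂, hV₃, hp, hκ]
end
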